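/- arXiv:1503.00458 — 2 statements merged into one kernel-verified Lean document; each statement's English description precedes it below -/
import Mathlib

section
/- If G is a connected prime graph and u, v are two non-adjacent vertices of G, then the triangle-path convex hull of {u, v} equals V(G). -/
/-!
Let `H` be the triangle-path hull of `{u, v}` and suppose some `z ∉ H`. Let `C` be the component
of `G - H` containing `z` and `K` its neighbourhood, which lies in `H`. Two non-adjacent vertices
of `K` would be joined by a shortest path whose interior lies in `C`; such a path is chordless,
hence a triangle path, so its interior lies in `H`, which is absurd. Thus `K` is a clique. As `u`
and `v` are non-adjacent, one of them lies outside `K`, and `K` separates it from `z`, contradicting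
primality.
-/

open Set

variable {V : Type*}

/-- `p` is a triangle path: a path with no edge joining vertices at index
distance greater than 2 along the path. -/
def TPath (G : SimpleGraph V) {u v : V} (p : G.Walk u v) : Prop :=
  p.IsPath ∧ ∀ i j : ℕ, i + 2 < j →
    ∀ (hi : i < p.support.length) (hj : j < p.support.length),
      ¬ G.Adj (p.support.get ⟨i, hi⟩) (p.support.get ⟨j, hj⟩)

/-- `p` is a monophonic (induced) path: a path with no edge joining vertices at
index distance greater than 1 along the path. -/
def MPath (G : SimpleGraph V) {u v : V} (p : G.Walk u v) : Prop :=
  p.IsPath ∧ ∀ i j : ℕ, i + 1 < j →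
    ∀ (hi : i < p.support.length) (hj : j < p.support.length),
      ¬ G.Adj (p.support.get ⟨i, hi⟩) (p.support.get ⟨j, hj⟩)

/-- `p` is a geodesic (shortest path). -/
def GPath (G : SimpleGraph V) {u v : V} (p : G.Walk u v) : Prop :=
  p.IsPath ∧ ∀ q : G.Walk u v, p.length ≤ q.length

/-- `S` is convex in the triangle path convexity. -/
def TConvex (G : SimpleGraph V) (S : Set V) : Prop :=
  ∀ ⦃u v : V⦄, u ∈ S → v ∈ S → ∀ p : G.Walk u v, TPath G p → ∀ w ∈ p.support, w ∈ S

/-- `S` is convex in the monophonic convexity. -/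
def MConvex (G : SimpleGraph V) (S : Set V) : Prop :=
  ∀ ⦃u v : V⦄, u ∈ S → v ∈ S → ∀ p : G.Walk u v, MPath G p → ∀ w ∈ p.support, w ∈ S

/-- `S` is convex in the geodetic convexity. -/
def GConvex (G : SimpleGraph V) (S : Set V) : Prop :=
  ∀ ⦃u v : V⦄, u ∈ S → v ∈ S → ∀ p : G.Walk u v, GPath G p → ∀ w ∈ p.support, w ∈ S

/-- `S` is `P₃`-convex: no vertex outside `S` has two neighbours in `S`. -/
def P3Convex (G : SimpleGraph V) (S : Set V) : Prop :=
  ∀ w ∉ S, ∀ a ∈ S, ∀ b ∈ S, G.Adj w a → G.Adj w b → a = b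

/-- The triangle path interval of `S`. -/
def TInterval (G : SimpleGraph V) (S : Set V) : Set V :=
  S ∪ {w | ∃ u ∈ S, ∃ v ∈ S, ∃ p : G.Walk u v, TPath G p ∧ w ∈ p.support}

/-- The monophonic interval of `S`. -/
def MInterval (G : SimpleGraph V) (S : Set V) : Set V :=
  S ∪ {w | ∃ u ∈ S, ∃ v ∈ S, ∃ p : G.Walk u v, MPath G p ∧ w ∈ p.support}

/-- The geodetic interval of `S`. -/
def GInterval (G : SimpleGraph V) (S : Set V) : Set V :=
  S ∪ {w | ∃ u ∈ S, ∃ v ∈ S, ∃ p : G.Walk u v, GPath G p ∧ w ∈ p.support}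

/-- The `P₃`-interval of `S`: `S` together with the vertices having at least two
neighbours in `S`. -/
def P3Interval (G : SimpleGraph V) (S : Set V) : Set V :=
  S ∪ {w | w ∉ S ∧ ∃ a ∈ S, ∃ b ∈ S, a ≠ b ∧ G.Adj w a ∧ G.Adj w b}

/-- The convex hull of `S` in the triangle path convexity. -/
def THull (G : SimpleGraph V) (S : Set V) : Set V :=
  ⋂₀ {C : Set V | S ⊆ C ∧ TConvex G C}

/-- The convex hull of `S` in the monophonic convexity. -/
def MHull (G : SimpleGraph V) (S : Set V) : Set V :=
  ⋂₀ {C : Set V | S ⊆ C ∧ MConvex G C}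

/-- The convex hull of `S` in the geodetic convexity. -/
def GHull (G : SimpleGraph V) (S : Set V) : Set V :=
  ⋂₀ {C : Set V | S ⊆ C ∧ GConvex G C}

/-- `K` separates the vertices `a` and `b`: both lie outside `K` and every walk
between them meets `K`. -/
def Separates (G : SimpleGraph V) (K : Set V) (a b : V) : Prop :=
  a ∉ K ∧ b ∉ K ∧ ∀ p : G.Walk a b, ∃ w ∈ p.support, w ∈ K

/-- `K` is a separator of `G`. -/
def IsSeparator (G : SimpleGraph V) (K : Set V) : Prop :=
  ∃ a b : V, Separates G K a b

/-- `G` is prime: it has no clique separator. -/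
def IsPrime (G : SimpleGraph V) : Prop :=
  ¬ ∃ C : Set V, G.IsClique C ∧ IsSeparator G C

/-- `K` is a minimal separator for `a` and `b`. -/
def IsMinSeparator (G : SimpleGraph V) (K : Set V) (a b : V) : Prop :=
  Separates G K a b ∧ ∀ K' : Set V, K' ⊂ K → ¬ Separates G K' a b

/-- `W` induces a maximal prime subgraph of `G`. -/
def IsMPSubgraph (G : SimpleGraph V) (W : Set V) : Prop :=
  IsPrime (G.induce W) ∧ ∀ W' : Set V, W ⊆ W' → IsPrime (G.induce W') → W' = W

/-- `C` is the vertex set of a connected component of `G - S`. -/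
def IsCompOf (G : SimpleGraph V) (S C : Set V) : Prop :=
  C.Nonempty ∧ C ∩ S = ∅ ∧
  (∀ x ∈ C, ∀ y ∈ C, ∃ p : G.Walk x y, ∀ w ∈ p.support, w ∈ C) ∧
  (∀ x ∈ C, ∀ y : V, y ∉ S → G.Adj x y → y ∈ C)

open SimpleGraph

variable {G : SimpleGraph V}

namespace SimpleGraph.Walk

variable {u v : V}

lemma exists_shorter_of_adj_getVert (p : G.Walk u v) {i j : ℕ} (hij : i + 1 < j)
    (hj : j ≤ p.length) (h : G.Adj (p.getVert i) (p.getVert j)) :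
    ∃ q : G.Walk u v, q.length < p.length ∧ q.support ⊆ p.support := by
  refine ⟨(p.take i).append (cons h (p.drop j)), ?_, ?_⟩
  · simp only [length_append, take_length, length_cons, drop_length]
    omega
  · intro w hw
    simp only [support_append, support_cons, List.tail_cons, support_take,
      drop_support_eq_support_drop_min, List.mem_append] at hw
    rcases hw with hw | hw
    · exact List.mem_of_mem_take hw
    · exact List.mem_of_mem_drop hw

lemma tPath_of_forall_support_subset_length_le {p : G.Walk u v}
    (hmin : ∀ q : G.Walk u v, q.support ⊆ p.support → p.length ≤ q.length) : TPath G p := by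
  classical
  refine ⟨?_, fun i j hij hi hj hadj => ?_⟩
  · rw [← p.bypass_eq_self_of_length_le_length_bypass (hmin _ p.support_bypass_subset_support)]
    exact p.bypass_isPath
  · simp only [List.get_eq_getElem, support_getElem_eq_getVert] at hadj
    obtain ⟨q, hlt, hsub⟩ :=
      p.exists_shorter_of_adj_getVert (by omega) (by rw [length_support] at hj; omega) hadj
    exact (hmin q hsub).not_gt hlt

lemma exists_tPath_of_support_subset {A : Set V} (p : G.Walk u v) (hp : ∀ w ∈ p.support, w ∈ A) :
    ∃ q : G.Walk u v, TPath G q ∧ ∀ w ∈ q.support, w ∈ A := by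
  obtain ⟨q, hqA, hmin⟩ := (measure fun q : G.Walk u v => q.length).wf.has_min
    {q | ∀ w ∈ q.support, w ∈ A} ⟨p, hp⟩
  refine ⟨q, tPath_of_forall_support_subset_length_le fun r hr => ?_, hqA⟩
  exact not_lt.mp (hmin r fun w hw => hqA w (hr hw))

end SimpleGraph.Walk

lemma subset_tHull (G : SimpleGraph V) (S : Set V) : S ⊆ THull G S :=
  fun _ hx => mem_sInter.2 fun _ hC => hC.1 hx

lemma tConvex_tHull (G : SimpleGraph V) (S : Set V) : TConvex G (THull G S) :=
  fun _ _ ha hb p hp w hw => mem_sInter.2 fun C hC =>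
    hC.2 (mem_sInter.1 ha C hC) (mem_sInter.1 hb C hC) p hp w hw

def openNbhd (G : SimpleGraph V) (C : Set V) : Set V :=
  {k | k ∉ C ∧ ∃ c ∈ C, G.Adj c k}

lemma exists_mem_openNbhd_of_walk {C : Set V} {x y : V} (p : G.Walk x y) (hx : x ∈ C)
    (hy : y ∉ C) : ∃ w ∈ p.support, w ∈ openNbhd G C := by
  obtain ⟨d, hd, hfst, hsnd⟩ := p.exists_boundary_dart C hx hy
  exact ⟨d.snd, p.dart_snd_mem_support_of_mem_darts hd, hsnd, d.fst, hfst, d.adj⟩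

lemma exists_isCompOf_mem {S : Set V} {z : V} (hz : z ∉ S) : ∃ C, z ∈ C ∧ IsCompOf G S C := by
  classical
  set C : Set V := {x | ∃ p : G.Walk z x, ∀ w ∈ p.support, w ∉ S}
  have support_subset : ∀ {x} (p : G.Walk z x), (∀ w ∈ p.support, w ∉ S) →
      ∀ w ∈ p.support, w ∈ C := fun p hp w hw =>
    ⟨p.takeUntil w hw, fun a ha => hp a (p.support_takeUntil_subset_support hw ha)⟩
  have hzC : z ∈ C := ⟨.nil, by simpa using hz⟩
  refine ⟨C, hzC, ⟨z, hzC⟩, ?_, ?_, ?_⟩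
  · exact eq_empty_of_forall_notMem fun x ⟨⟨p, hp⟩, hxS⟩ => hp x p.end_mem_support hxS
  · rintro x ⟨px, hpx⟩ y ⟨py, hpy⟩
    refine ⟨px.reverse.append py, fun w hw => ?_⟩
    rw [Walk.mem_support_append_iff, Walk.support_reverse, List.mem_reverse] at hw
    exact hw.elim (support_subset px hpx w) (support_subset py hpy w)
  · rintro x ⟨p, hp⟩ y hyS hxy
    refine ⟨p.concat hxy, fun w hw => ?_⟩
    rw [Walk.support_concat, List.mem_append, List.mem_singleton] at hw
    exact hw.elim (hp w) fun h => h ▸ hyS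

namespace IsCompOf

variable {S C : Set V}

lemma notMem_of_mem (hC : IsCompOf G S C) {x : V} (hx : x ∈ C) : x ∉ S :=
  fun hxS => (eq_empty_iff_forall_notMem.1 hC.2.1) x ⟨hx, hxS⟩

lemma openNbhd_subset (hC : IsCompOf G S C) : openNbhd G C ⊆ S := by
  rintro k ⟨hkC, c, hc, hck⟩
  by_contra hkS
  exact hkC (hC.2.2.2 c hc k hkS hck)

lemma isClique_openNbhd (hS : TConvex G S) (hC : IsCompOf G S C) :
    G.IsClique (openNbhd G C) := by
  intro k₁ hk₁ k₂ hk₂ hne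
  by_contra hnadj
  obtain ⟨hk₁C, c₁, hc₁, h₁⟩ := hk₁
  obtain ⟨hk₂C, c₂, hc₂, h₂⟩ := hk₂
  obtain ⟨r, hr⟩ := hC.2.2.1 c₁ hc₁ c₂ hc₂
  obtain ⟨q, hqT, hqC⟩ := (Walk.cons h₁.symm (r.concat h₂)).exists_tPath_of_support_subset
    (A := insert k₁ (insert k₂ C)) (by
      intro w hw
      rw [Walk.support_cons, Walk.support_concat, List.mem_cons, List.mem_append,
        List.mem_singleton] at hw
      rcases hw with rfl | hw | rfl
      exacts [mem_insert _ _, mem_insert_of_mem _ (mem_insert_of_mem _ (hr w hw)),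
        mem_insert_of_mem _ (mem_insert _ _)])
  have hsnd : G.Adj k₁ q.snd := q.adj_snd (Walk.not_nil_of_ne hne)
  have hsndC : q.snd ∈ C := by
    rcases hqC _ (q.getVert_mem_support 1) with h | h | h
    · exact absurd h hsnd.ne'
    · exact absurd (h ▸ hsnd) hnadj
    · exact h
  have hk₁S := hC.openNbhd_subset ⟨hk₁C, c₁, hc₁, h₁⟩
  have hk₂S := hC.openNbhd_subset ⟨hk₂C, c₂, hc₂, h₂⟩
  exact hC.notMem_of_mem hsndC (hS hk₁S hk₂S q hqT _ (q.getVert_mem_support 1))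

end IsCompOf

theorem stmt_6_general (G : SimpleGraph V)
    (hprime : IsPrime G) (u v : V) (huv : u ≠ v) (hadj : ¬ G.Adj u v) :
    THull G {u, v} = Set.univ := by
  refine eq_univ_of_forall fun z => by_contra fun hz => ?_
  obtain ⟨C, hzC, hC⟩ := exists_isCompOf_mem hz
  have hK := hC.isClique_openNbhd (tConvex_tHull G {u, v})
  obtain ⟨a, ha, haK⟩ : ∃ a ∈ ({u, v} : Set V), a ∉ openNbhd G C := by
    by_contra! h
    exact hadj (hK (h u (mem_insert _ _)) (h v (mem_insert_of_mem _ rfl)) huv)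
  have haC : a ∉ C := fun h => hC.notMem_of_mem h (subset_tHull G _ ha)
  exact hprime ⟨openNbhd G C, hK, z, a, fun h => h.1 hzC, haK,
    fun p => exists_mem_openNbhd_of_walk p hzC haC⟩

theorem stmt_6 [Fintype V] (G : SimpleGraph V) (hconn : G.Connected)
    (hprime : IsPrime G) (u v : V) (huv : u ≠ v) (hadj : ¬ G.Adj u v) :
    THull G {u, v} = Set.univ :=
  stmt_6_general G hprime u v huv hadj
end

section
/- Let G be a prime graph and S a proper subset of V(G). Then S is t-convex if and only if S is a clique and every vertex outside S has at most one neighbour in S. -/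
open Set

variable {V : Type*}

/-!
A t-convex set `S` is P₃-convex, since `a - w - b` is a triangle path. It is also a clique:
pick `v ∉ S`, let `C` be the component of `G - S` containing `v` and `K ⊆ S` the set of
neighbours of `C`. Two nonadjacent vertices of `K` are joined by a walk through `C`, and a
chordless path inside that walk is a triangle path leaving `S`; so `K` is a clique. As `K`
separates `v` from every vertex of `S \ K`, primality forces `S = K`.
Conversely, if `S` is a clique then a triangle path between two vertices of `S` has length at
most 2, and its middle vertex has two neighbours in `S`.
-/

open SimpleGraph

section TrianglePaths

variable {G : SimpleGraph V} {u v : V}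

lemma forall_not_adj_support_get_iff (p : G.Walk u v) (k : ℕ) :
    (∀ i j : ℕ, i + k < j → ∀ (hi : i < p.support.length) (hj : j < p.support.length),
      ¬ G.Adj (p.support.get ⟨i, hi⟩) (p.support.get ⟨j, hj⟩)) ↔
    ∀ i j : ℕ, i + k < j → j ≤ p.length → ¬ G.Adj (p.getVert i) (p.getVert j) := by
  simp only [List.get_eq_getElem, Walk.support_getElem_eq_getVert, Walk.length_support,
    Nat.lt_succ_iff]
  exact ⟨fun h i j hij hj => h i j hij (by omega) hj, fun h i j hij _ hj => h i j hij hj⟩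

lemma tPath_iff (p : G.Walk u v) :
    TPath G p ↔
      p.IsPath ∧
        ∀ i j : ℕ, i + 2 < j → j ≤ p.length → ¬ G.Adj (p.getVert i) (p.getVert j) := by
  rw [TPath, forall_not_adj_support_get_iff]

lemma mPath_iff (p : G.Walk u v) :
    MPath G p ↔
      p.IsPath ∧
        ∀ i j : ℕ, i + 1 < j → j ≤ p.length → ¬ G.Adj (p.getVert i) (p.getVert j) := by
  rw [MPath, forall_not_adj_support_get_iff]

lemma MPath.tPath {p : G.Walk u v} (hp : MPath G p) : TPath G p :=
  ⟨hp.1, fun i j hij => hp.2 i j (by omega)⟩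

lemma tPath_of_length_le_two {p : G.Walk u v} (hp : p.IsPath) (hlen : p.length ≤ 2) :
    TPath G p :=
  (tPath_iff p).2 ⟨hp, fun i j hij hj => by omega⟩

lemma TPath.length_le_two_of_adj {p : G.Walk u v} (hp : TPath G p) (huv : G.Adj u v) :
    p.length ≤ 2 := by
  by_contra! hlen
  refine ((tPath_iff p).1 hp).2 0 p.length (by omega) le_rfl ?_
  rwa [Walk.getVert_zero, Walk.getVert_length]

lemma SimpleGraph.Walk.exists_shortcut (p : G.Walk u v) {i j : ℕ} (hj : j ≤ p.length)
    (hadj : G.Adj (p.getVert i) (p.getVert j)) :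
    ∃ q : G.Walk u v, q.length ≤ i + 1 + (p.length - j) ∧ q.support ⊆ p.support := by
  refine ⟨(p.take i).append (.cons hadj (p.drop j)), ?_, ?_⟩
  · simp only [Walk.length_append, Walk.length_cons, Walk.take_length, Walk.drop_length]
    omega
  · intro w hw
    rw [Walk.mem_support_append_iff, Walk.support_cons, List.mem_cons] at hw
    rcases hw with hw | rfl | hw
    · exact (p.isSubwalk_take i).support_subset hw
    · exact (p.isSubwalk_take i).support_subset (p.take i).end_mem_support
    · exact (p.isSubwalk_drop j).support_subset hw

lemma SimpleGraph.Walk.exists_mPath_support_subset (q : G.Walk u v) :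
    ∃ p : G.Walk u v, MPath G p ∧ p.support ⊆ q.support := by
  classical
  induction hn : q.length using Nat.strong_induction_on generalizing q with
  | _ n ih =>
    by_cases hchord : ∃ i j : ℕ, i + 1 < j ∧ j ≤ q.bypass.length ∧
        G.Adj (q.bypass.getVert i) (q.bypass.getVert j)
    · obtain ⟨i, j, hij, hj, hadj⟩ := hchord
      obtain ⟨r, hr, hrq⟩ := q.bypass.exists_shortcut hj hadj
      obtain ⟨p, hp, hpr⟩ := ih r.length (by have := q.length_bypass_le_length; omega) r rfl
      exact ⟨p, hp, fun w hw => q.support_bypass_subset_support (hrq (hpr hw))⟩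
    · push Not at hchord
      exact ⟨q.bypass, (mPath_iff _).2 ⟨q.bypass_isPath, fun i j hij hj => hchord i j hij hj⟩,
        q.support_bypass_subset_support⟩

end TrianglePaths

section Convexity

variable {G : SimpleGraph V} {S : Set V}

lemma tConvex_of_isClique_of_p3Convex (hclique : G.IsClique S) (hP3 : P3Convex G S) :
    TConvex G S := by
  intro u v hu hv p hp w hw
  obtain rfl | huv := eq_or_ne u v
  · rw [Walk.nil_iff_support_eq.mp (Walk.isPath_iff_nil.mp hp.1), List.mem_singleton] at hw
    exact hw ▸ hu
  have hlen := hp.length_le_two_of_adj (hclique hu hv huv)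
  obtain ⟨n, rfl, hn⟩ := Walk.mem_support_iff_exists_getVert.mp hw
  obtain rfl | hn0 := Nat.eq_zero_or_pos n
  · rwa [Walk.getVert_zero]
  obtain rfl | hnlt := hn.eq_or_lt
  · rwa [Walk.getVert_length]
  have hlen2 : p.length = 2 := by omega
  obtain rfl : n = 1 := by omega
  by_contra hw
  refine huv (hP3 _ hw u hu v hv ?_ ?_)
  · simpa using (p.adj_getVert_succ (i := 0) (by omega)).symm
  · simpa [← hlen2] using p.adj_getVert_succ (i := 1) (by omega)

lemma TConvex.p3Convex (hT : TConvex G S) : P3Convex G S := by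
  intro w hw a ha b hb hwa hwb
  by_contra hab
  let p : G.Walk a b := .cons hwa.symm hwb.toWalk
  have hp : p.IsPath := by
    simp [p, Walk.cons_isPath_iff, hab, hwa.ne', hwb.ne]
  exact hw (hT ha hb p (tPath_of_length_le_two hp le_rfl) w (by simp [p]))

lemma TConvex.eq_or_adj_of_walk (hT : TConvex G S) {x y : V} (hx : x ∈ S) (hy : y ∈ S)
    (q : G.Walk x y) (hq : ∀ w ∈ q.support, w ∈ S → w = x ∨ w = y) :
    x = y ∨ G.Adj x y := by
  by_contra! hxy
  obtain ⟨p, hp, hpq⟩ := q.exists_mPath_support_subset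
  have hnil : ¬ p.Nil := Walk.not_nil_of_ne hxy.1
  have hsnd : p.snd ∈ p.support := p.getVert_mem_support 1
  rcases hq _ (hpq hsnd) (hT hx hy p hp.tPath _ hsnd) with h | h
  · exact (p.adj_snd hnil).ne h.symm
  · exact hxy.2 (h ▸ p.adj_snd hnil)

end Convexity

section Component

variable {G : SimpleGraph V} {S : Set V} {v : V}

def outsideComp (G : SimpleGraph V) (S : Set V) (v : V) : Set V :=
  {c | ∃ p : G.Walk v c, ∀ w ∈ p.support, w ∉ S}

def outsideCompBoundary (G : SimpleGraph V) (S : Set V) (v : V) : Set V :=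
  {s ∈ S | ∃ c ∈ outsideComp G S v, G.Adj s c}

lemma notMem_of_mem_outsideComp {c : V} (hc : c ∈ outsideComp G S v) : c ∉ S :=
  let ⟨p, hp⟩ := hc
  hp c p.end_mem_support

lemma mem_outsideComp_self (hv : v ∉ S) : v ∈ outsideComp G S v :=
  ⟨.nil, by simpa using hv⟩

lemma mem_outsideComp_of_adj {c d : V} (hc : c ∈ outsideComp G S v) (hcd : G.Adj c d)
    (hd : d ∉ S) : d ∈ outsideComp G S v := by
  obtain ⟨p, hp⟩ := hc
  refine ⟨p.concat hcd, fun w hw => ?_⟩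
  rw [Walk.support_concat, List.mem_append, List.mem_singleton] at hw
  rcases hw with hw | rfl
  exacts [hp w hw, hd]

lemma exists_mem_outsideCompBoundary_of_walk {a z : V} (ha : a ∈ outsideComp G S v)
    (hz : z ∈ S) (p : G.Walk a z) : ∃ w ∈ p.support, w ∈ outsideCompBoundary G S v := by
  induction p with
  | nil => exact absurd hz (notMem_of_mem_outsideComp ha)
  | @cons a b z hab q ih =>
    by_cases hb : b ∈ S
    · exact ⟨b, by simp, hb, a, ha, hab.symm⟩
    · obtain ⟨w, hw, hwK⟩ := ih (mem_outsideComp_of_adj ha hab hb) hz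
      exact ⟨w, List.mem_cons_of_mem _ hw, hwK⟩

lemma separates_outsideCompBoundary (hv : v ∉ S) {z : V} (hz : z ∈ S)
    (hzK : z ∉ outsideCompBoundary G S v) : Separates G (outsideCompBoundary G S v) v z :=
  ⟨fun h => hv h.1, hzK, exists_mem_outsideCompBoundary_of_walk (mem_outsideComp_self hv) hz⟩

lemma exists_walk_of_mem_outsideCompBoundary {x y : V} (hx : x ∈ outsideCompBoundary G S v)
    (hy : y ∈ outsideCompBoundary G S v) :
    ∃ q : G.Walk x y, ∀ w ∈ q.support, w ∈ S → w = x ∨ w = y := by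
  obtain ⟨-, c, ⟨p, hp⟩, hxc⟩ := hx
  obtain ⟨-, d, ⟨r, hr⟩, hyd⟩ := hy
  refine ⟨.cons hxc (p.reverse.append (r.concat hyd.symm)), fun w hw hwS => ?_⟩
  simp only [Walk.support_cons, List.mem_cons, Walk.mem_support_append_iff,
    Walk.support_reverse, List.mem_reverse, Walk.support_concat, List.mem_append,
    List.not_mem_nil, or_false] at hw
  rcases hw with rfl | hw | hw | rfl
  · exact .inl rfl
  · exact absurd hwS (hp w hw)
  · exact absurd hwS (hr w hw)
  · exact .inr rfl

lemma TConvex.isClique_outsideCompBoundary (hT : TConvex G S) :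
    G.IsClique (outsideCompBoundary G S v) := by
  intro x hx y hy hxy
  obtain ⟨q, hq⟩ := exists_walk_of_mem_outsideCompBoundary hx hy
  exact (hT.eq_or_adj_of_walk hx.1 hy.1 q hq).resolve_left hxy

lemma TConvex.isClique_of_isPrime (hprime : IsPrime G) (hT : TConvex G S) (hv : v ∉ S) :
    G.IsClique S := by
  have hSK : S ⊆ outsideCompBoundary G S v := fun z hz => by
    by_contra hzK
    exact hprime ⟨_, hT.isClique_outsideCompBoundary, v, z,
      separates_outsideCompBoundary hv hz hzK⟩
  exact hT.isClique_outsideCompBoundary.subset hSK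

end Component

theorem stmt_7_general (G : SimpleGraph V)
    (hprime : IsPrime G) (S : Set V) (hproper : S ≠ Set.univ) :
    TConvex G S ↔
      G.IsClique S ∧ ∀ w ∉ S, ∀ a ∈ S, ∀ b ∈ S, G.Adj w a → G.Adj w b → a = b := by
  refine ⟨fun hT => ⟨?_, hT.p3Convex⟩,
    fun ⟨hclique, hP3⟩ => tConvex_of_isClique_of_p3Convex hclique hP3⟩
  obtain ⟨v, hv⟩ := (Set.ne_univ_iff_exists_notMem S).mp hproper
  exact hT.isClique_of_isPrime hprime hv

theorem stmt_7 [Fintype V] (G : SimpleGraph V) (hconn : G.Connected)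
    (hprime : IsPrime G) (S : Set V) (hproper : S ≠ Set.univ) :
    TConvex G S ↔
      G.IsClique S ∧ ∀ w ∉ S, ∀ a ∈ S, ∀ b ∈ S, G.Adj w a → G.Adj w b → a = b :=
  stmt_7_general G hprime S hproper
end
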